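/- Let u : Ω_ε → ℝ be bounded and Lipschitz continuous, and let x̃ ∈ ∂Ω. Then (Iu)(x) → F(x̃) as x → x̃ with x ∈ Ω_ε; that is, Iu attains the boundary value F(x̃) continuously at every point of ∂Ω. -/

import Mathlib

open MeasureTheory Metric Filter Set
open scoped RealInnerProductSpace ENNReal NNReal Topology Classical

noncomputable section

abbrev E (n : ℕ) : Type := EuclideanSpace ℝ (Fin n)

/-- The closed `(n-1)`-dimensional disk of radius `ε` orthogonal to `v`. -/
def diskSet (n : ℕ) (ε : ℝ) (v : E n) : Set (E n) :=
  {z | ⟪z, v⟫ = 0 ∧ ‖z‖ ≤ ε}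

/-- The uniform probability measure on `diskSet n ε v`: the `(n-1)`-dimensional
Hausdorff measure restricted to the disk, normalized to total mass 1. -/
def diskMeasure (n : ℕ) (ε : ℝ) (v : E n) : Measure (E n) :=
  (μH[(n : ℝ) - 1] (diskSet n ε v))⁻¹ • μH[(n : ℝ) - 1].restrict (diskSet n ε v)

/-- `Wfun n ε α β u x v = α u(x+v) + β ∫ u(x+z) dμ_v(z)`. -/
def Wfun (n : ℕ) (ε α β : ℝ) (u : E n → ℝ) (x v : E n) : ℝ :=
  α * u (x + v) + β * ∫ z, u (x + z) ∂(diskMeasure n ε v)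

/-- The outside boundary strip `O_ε`. -/
def Oeps (n : ℕ) (ε : ℝ) (Ω : Set (E n)) : Set (E n) :=
  {x | x ∉ Ω ∧ infDist x (frontier Ω) ≤ ε}

/-- The thickened domain `Ω_ε = Ω ∪ O_ε`. -/
def Omegaeps (n : ℕ) (ε : ℝ) (Ω : Set (E n)) : Set (E n) :=
  Ω ∪ Oeps n ε Ω

/-- The boundary cutoff function `δ`. -/
def cutoff (n : ℕ) (ε : ℝ) (Ω : Set (E n)) (x : E n) : ℝ :=
  if x ∈ Ω then
    (if infDist x (frontier Ω) ≤ ε then 1 - ε⁻¹ * infDist x (frontier Ω) else 0)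
  else 1

/-- The DPP operator `I`. -/
def Iop (n : ℕ) (ε α β : ℝ) (Ω : Set (E n)) (F : E n → ℝ) (u : E n → ℝ) : E n → ℝ :=
  fun x =>
    if x ∈ Ω then
      ((1 - cutoff n ε Ω x) / 2) *
          (sSup (Wfun n ε α β u x '' sphere (0 : E n) ε) +
            sInf (Wfun n ε α β u x '' sphere (0 : E n) ε)) +
        cutoff n ε Ω x * F x
    else F x

lemma ennreal_inv_mul_le_one (a : ℝ≥0∞) : a⁻¹ * a ≤ 1 := by
  rcases eq_or_ne a 0 with h | h
  · simp [h]
  rcases eq_or_ne a ⊤ with h' | h'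
  · simp [h']
  · rw [ENNReal.inv_mul_cancel h h']

lemma diskMeasure_univ_le (n : ℕ) (ε : ℝ) (v : E n) :
    diskMeasure n ε v Set.univ ≤ 1 := by
  rw [diskMeasure]
  simp only [Measure.smul_apply, Measure.restrict_apply_univ, smul_eq_mul]
  exact ennreal_inv_mul_le_one _

instance diskMeasure_finite (n : ℕ) (ε : ℝ) (v : E n) :
    IsFiniteMeasure (diskMeasure n ε v) :=
  ⟨lt_of_le_of_lt (diskMeasure_univ_le n ε v) ENNReal.one_lt_top⟩

lemma isClosed_diskSet (n : ℕ) (ε : ℝ) (v : E n) : IsClosed (diskSet n ε v) := by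
  have : diskSet n ε v = {z : E n | ⟪z, v⟫ = 0} ∩ {z : E n | ‖z‖ ≤ ε} := by
    ext z; simp [diskSet, Set.mem_setOf_eq, Set.mem_inter_iff]
  rw [this]
  exact (isClosed_eq (Continuous.inner continuous_id continuous_const) continuous_const).inter
    (isClosed_le continuous_norm continuous_const)

lemma ae_mem_diskSet (n : ℕ) (ε : ℝ) (v : E n) :
    ∀ᵐ z ∂(diskMeasure n ε v), z ∈ diskSet n ε v := by
  rw [diskMeasure]
  exact Measure.ae_smul_measure (ae_restrict_mem (isClosed_diskSet n ε v).measurableSet) _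

/-- Any point within distance `ε` of a point of `Ω` belongs to `Ω_ε`. -/
lemma mem_Omegaeps_of_dist_le {n : ℕ} {ε : ℝ} {Ω : Set (E n)} (hΩo : IsOpen Ω)
    {x y : E n} (hx : x ∈ Ω) (h : dist y x ≤ ε) : y ∈ Omegaeps n ε Ω := by
  by_cases hy : y ∈ Ω
  · exact Or.inl hy
  · refine Or.inr ⟨hy, ?_⟩
    have hseg : (segment ℝ x y ∩ frontier Ω).Nonempty := by
      by_contra hcon
      rw [Set.not_nonempty_iff_eq_empty] at hcon
      have hpre : IsPreconnected (segment ℝ x y) := (convex_segment x y).isPreconnected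
      have hsub : segment ℝ x y ⊆ Ω ∪ (closure Ω)ᶜ := by
        intro z hz
        by_cases hzΩ : z ∈ Ω
        · exact Or.inl hzΩ
        · refine Or.inr fun hzc => ?_
          have : z ∈ frontier Ω := ⟨hzc, by rwa [hΩo.interior_eq]⟩
          exact absurd (Set.eq_empty_iff_forall_notMem.1 hcon z ⟨hz, this⟩) (fun h => h)
      have h1 : (segment ℝ x y ∩ Ω).Nonempty := ⟨x, left_mem_segment ℝ x y, hx⟩
      have h2 : (segment ℝ x y ∩ (closure Ω)ᶜ).Nonempty := by
        refine ⟨y, right_mem_segment ℝ x y, fun hyc => ?_⟩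
        have : y ∈ frontier Ω := ⟨hyc, by rwa [hΩo.interior_eq]⟩
        exact absurd (Set.eq_empty_iff_forall_notMem.1 hcon y
          ⟨right_mem_segment ℝ x y, this⟩) (fun h => h)
      obtain ⟨z, hz1, hz2, hz3⟩ := hpre Ω (closure Ω)ᶜ hΩo (isClosed_closure.isOpen_compl)
        hsub h1 h2
      exact hz3 (subset_closure hz2)
    obtain ⟨z, hzseg, hzf⟩ := hseg
    calc infDist y (frontier Ω) ≤ dist y z := infDist_le_dist_of_mem hzf
      _ ≤ dist y x := by
          have := dist_add_dist_of_mem_segment hzseg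
          have h0 : 0 ≤ dist x z := dist_nonneg
          rw [dist_comm y z, dist_comm y x]
          linarith [dist_add_dist_of_mem_segment hzseg]
      _ ≤ ε := h

lemma abs_Wfun_le {n : ℕ} {ε : ℝ} (hε : 0 < ε) {Ω : Set (E n)} (hΩo : IsOpen Ω)
    {α β : ℝ} (hα : 0 ≤ α) (hβ : 0 ≤ β) (hαβ : α + β = 1)
    {u : E n → ℝ} {M' : ℝ} (hM' : 0 ≤ M')
    (hub : ∀ y ∈ Omegaeps n ε Ω, |u y| ≤ M')
    {x : E n} (hx : x ∈ Ω) {v : E n} (hv : v ∈ sphere (0 : E n) ε) :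
    |Wfun n ε α β u x v| ≤ M' := by
  have hvn : ‖v‖ = ε := by simpa using hv
  have h1 : |u (x + v)| ≤ M' := by
    apply hub
    apply mem_Omegaeps_of_dist_le hΩo hx
    simp [dist_eq_norm, hvn]
  have h2 : |∫ z, u (x + z) ∂(diskMeasure n ε v)| ≤ M' := by
    have hae : ∀ᵐ z ∂(diskMeasure n ε v), ‖u (x + z)‖ ≤ M' := by
      filter_upwards [ae_mem_diskSet n ε v] with z hz
      rw [Real.norm_eq_abs]
      apply hub
      apply mem_Omegaeps_of_dist_le hΩo hx
      simpa [dist_eq_norm] using hz.2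
    calc |∫ z, u (x + z) ∂(diskMeasure n ε v)|
        ≤ M' * (diskMeasure n ε v Set.univ).toReal :=
          norm_integral_le_of_norm_le_const hae
      _ ≤ M' * 1 := by
          apply mul_le_mul_of_nonneg_left _ hM'
          have := diskMeasure_univ_le n ε v
          calc (diskMeasure n ε v Set.univ).toReal
              ≤ (1 : ℝ≥0∞).toReal := ENNReal.toReal_mono (by simp) this
            _ = 1 := by simp
      _ = M' := mul_one M'
  calc |Wfun n ε α β u x v| ≤ α * |u (x + v)| + β * |∫ z, u (x + z) ∂(diskMeasure n ε v)| := by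
        rw [Wfun]
        refine (abs_add_le _ _).trans ?_
        rw [abs_mul, abs_mul, abs_of_nonneg hα, abs_of_nonneg hβ]
    _ ≤ α * M' + β * M' := by
        gcongr
    _ = M' := by rw [← add_mul, hαβ, one_mul]

theorem stmt_4 (n : ℕ) (hn : 2 ≤ n) (ε : ℝ) (hε : 0 < ε)
    (Ω : Set (E n)) (hΩo : IsOpen Ω) (hΩc : IsConnected Ω) (hΩb : Bornology.IsBounded Ω)
    (α β : ℝ) (hα : 0 ≤ α) (hβ : 0 ≤ β) (hαβ : α + β = 1)
    (F : E n → ℝ) (KF : ℝ≥0) (hF : LipschitzOnWith KF F (Omegaeps n ε Ω))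
    (MF : ℝ) (hFb : ∀ x ∈ Omegaeps n ε Ω, |F x| ≤ MF)
    (u : E n → ℝ) (M : ℝ) (hub : ∀ x ∈ Omegaeps n ε Ω, |u x| ≤ M)
    (Ku : ℝ≥0) (hu : LipschitzOnWith Ku u (Omegaeps n ε Ω))
    (x₀ : E n) (hx₀ : x₀ ∈ frontier Ω) :
    Tendsto (Iop n ε α β Ω F u) (𝓝[Omegaeps n ε Ω] x₀) (𝓝 (F x₀)) := by
  -- x₀ ∈ Ω_ε
  have hx₀mem : x₀ ∈ Omegaeps n ε Ω := by
    by_cases h : x₀ ∈ Ω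
    · exact Or.inl h
    · exact Or.inr ⟨h, by rw [infDist_zero_of_mem hx₀]; exact hε.le⟩
  set M' : ℝ := max M 0 with hM'def
  have hM' : 0 ≤ M' := le_max_right _ _
  have hub' : ∀ y ∈ Omegaeps n ε Ω, |u y| ≤ M' := fun y hy =>
    (hub y hy).trans (le_max_left _ _)
  set MF' : ℝ := max MF 0 with hMF'def
  have hMF' : 0 ≤ MF' := le_max_right _ _
  have hFb' : ∀ y ∈ Omegaeps n ε Ω, |F y| ≤ MF' := fun y hy =>
    (hFb y hy).trans (le_max_left _ _)
  -- sphere nonempty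
  haveI : Nontrivial (E n) := by
    refine ⟨0, EuclideanSpace.single (⟨0, by omega⟩ : Fin n) (1:ℝ), ?_⟩
    intro h
    have := congrArg (fun f : E n => f ⟨0, by omega⟩) h
    simp [EuclideanSpace.single_apply] at this
  have hsne : (sphere (0 : E n) ε).Nonempty :=
    NormedSpace.sphere_nonempty.2 hε.le
  -- key pointwise bound
  set C : ℝ := ε⁻¹ * (M' + MF') with hCdef
  have hC : 0 ≤ C := mul_nonneg (inv_nonneg.2 hε.le) (by linarith)
  have key : ∀ x ∈ Omegaeps n ε Ω,
      |Iop n ε α β Ω F u x - F x| ≤ C * dist x x₀ := by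
    intro x hxmem
    have hdistpos : 0 ≤ C * dist x x₀ := mul_nonneg hC dist_nonneg
    by_cases hx : x ∈ Ω
    · -- bounds on W image
      set S := sSup (Wfun n ε α β u x '' sphere (0 : E n) ε) with hSdef
      set I := sInf (Wfun n ε α β u x '' sphere (0 : E n) ε) with hIdef
      have hWb : ∀ w ∈ Wfun n ε α β u x '' sphere (0 : E n) ε, |w| ≤ M' := by
        rintro w ⟨v, hv, rfl⟩
        exact abs_Wfun_le hε hΩo hα hβ hαβ hM' hub' hx hv
      have hne : (Wfun n ε α β u x '' sphere (0 : E n) ε).Nonempty := hsne.image _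
      have hSle : S ≤ M' := csSup_le hne fun w hw => (abs_le.1 (hWb w hw)).2
      have hSge : -M' ≤ S := by
        obtain ⟨w, hw⟩ := hne
        exact ((abs_le.1 (hWb w hw)).1).trans (le_csSup ⟨M', fun y hy => (abs_le.1 (hWb y hy)).2⟩ hw)
      have hIle : I ≤ M' := by
        obtain ⟨w, hw⟩ := hne
        exact (csInf_le ⟨-M', fun y hy => (abs_le.1 (hWb y hy)).1⟩ hw).trans
          ((abs_le.1 (hWb w hw)).2)
      have hIge : -M' ≤ I := le_csInf hne fun w hw => (abs_le.1 (hWb w hw)).1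
      -- cutoff bounds
      set d := infDist x (frontier Ω) with hddef
      have hd0 : 0 ≤ d := infDist_nonneg
      set δ := cutoff n ε Ω x with hδdef
      have hδeq : δ = if d ≤ ε then 1 - ε⁻¹ * d else 0 := by
        rw [hδdef, cutoff, if_pos hx]
      have hδle1 : δ ≤ 1 := by
        rw [hδeq]; split
        · nlinarith [mul_nonneg (inv_nonneg.2 hε.le) hd0]
        · norm_num
      have h1mδ : 1 - δ ≤ ε⁻¹ * d := by
        rw [hδeq]; split
        · linarith
        · rename_i h
          push_neg at h
          have : 1 = ε⁻¹ * ε := (inv_mul_cancel₀ hε.ne').symm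
          rw [this]
          simp only [sub_zero]
          exact mul_le_mul_of_nonneg_left h.le (inv_nonneg.2 hε.le)
      have h1mδ0 : 0 ≤ 1 - δ := by linarith
      have hdle : d ≤ dist x x₀ := infDist_le_dist_of_mem hx₀
      have hIopx : Iop n ε α β Ω F u x = (1 - δ) / 2 * (S + I) + δ * F x := by
        rw [Iop]; simp only [if_pos hx]; rfl
      have hFx : |F x| ≤ MF' := hFb' x (Or.inl hx)
      have habsSI : |S + I| ≤ 2 * M' := by
        have := abs_add_le S I
        have hSabs : |S| ≤ M' := abs_le.2 ⟨hSge, hSle⟩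
        have hIabs : |I| ≤ M' := abs_le.2 ⟨hIge, hIle⟩
        linarith
      calc |Iop n ε α β Ω F u x - F x|
          = |(1 - δ) / 2 * (S + I) - (1 - δ) * F x| := by rw [hIopx]; ring_nf
        _ ≤ |(1 - δ) / 2 * (S + I)| + |(1 - δ) * F x| := abs_sub _ _
        _ = (1 - δ) / 2 * |S + I| + (1 - δ) * |F x| := by
            rw [abs_mul, abs_mul, abs_of_nonneg (by linarith : (0:ℝ) ≤ (1 - δ)/2),
              abs_of_nonneg h1mδ0]
        _ ≤ (1 - δ) / 2 * (2 * M') + (1 - δ) * MF' := by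
            gcongr
        _ = (1 - δ) * (M' + MF') := by ring
        _ ≤ (ε⁻¹ * d) * (M' + MF') := by
            apply mul_le_mul_of_nonneg_right h1mδ (by linarith)
        _ ≤ (ε⁻¹ * dist x x₀) * (M' + MF') := by
            apply mul_le_mul_of_nonneg_right _ (by linarith)
            exact mul_le_mul_of_nonneg_left hdle (inv_nonneg.2 hε.le)
        _ = C * dist x x₀ := by rw [hCdef]; ring
    · rw [Iop]; simp only [if_neg hx, sub_self, abs_zero]
      exact hdistpos
  -- conclude
  have hdiff : Tendsto (fun x => Iop n ε α β Ω F u x - F x) (𝓝[Omegaeps n ε Ω] x₀) (𝓝 0) := by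
    apply squeeze_zero_norm' (a := fun x => C * dist x x₀)
    · filter_upwards [eventually_mem_nhdsWithin] with x hx
      simpa [Real.norm_eq_abs] using key x hx
    · have : Tendsto (fun x : E n => dist x x₀) (𝓝[Omegaeps n ε Ω] x₀) (𝓝 0) := by
        have hc : Continuous (fun x : E n => dist x x₀) :=
          continuous_id.dist continuous_const
        have := hc.tendsto x₀
        simpa using this.mono_left nhdsWithin_le_nhds
      simpa using this.const_mul C
  have hFt : Tendsto F (𝓝[Omegaeps n ε Ω] x₀) (𝓝 (F x₀)) :=
    (hF.continuousOn x₀ hx₀mem)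
  have := hdiff.add hFt
  simpa using this
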